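/- Let ρ = 1/2 + iγ, with γ > 0, be a zero of ζ(s). Then there exists δ > 0 such that for all real v with 0 < |v − γ| < δ one has η(1/2 + iv) ≠ 0 and Im η(1/2 + iv) ≠ 0, and moreover Re η(1/2 + iv) / Im η(1/2 + iv) → 0 as v → γ (both as v → γ from above and from below). Equivalently, the one-sided limits lim_{v→γ⁺} arg η(1/2+iv) and lim_{v→γ⁻} arg η(1/2+iv) are both congruent to π/2 modulo π. -/

import Mathlib

/-!
On the critical line the completed zeta function `Λ = Γℝ · ζ` is real: `φ(v) := Λ(1/2 + iv)`
is a real-analytic function of `v`, since `Λ(s̄) = conj Λ(s)` and `Λ(1 - s) = Λ(s)`.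
Writing `ζ = Λ · Γℝ⁻¹` gives `η = Γℝ ζ' = Λ' + L Λ` with `L` the logarithmic derivative of the
entire function `Γℝ⁻¹`, and `Λ'(1/2 + iv) = -i φ'(v)`, so
`Re η = Re L · φ` and `Im η = Im L · φ - φ'` on the line.
At a zero `γ` of `φ`, which has finite order because `ζ` is not identically zero,
`φ / φ' → 0`, hence `Im η = φ' (Im L · φ/φ' - 1)` does not vanish near `γ` and
`Re η / Im η = Re L · (φ/φ') / (Im L · φ/φ' - 1) → 0`.
-/

open Complex Filter Topology

/-- The function `η(s) = π^{-s/2} Γ(s/2) ζ'(s)`. -/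
noncomputable def etaFun (s : ℂ) : ℂ :=
  (Real.pi : ℂ) ^ (-s/2) * Complex.Gamma (s/2) * deriv riemannZeta s

/-- `F(t) = -Re (η'/η)(1/2+it)` (junk value where `η(1/2+it) = 0`). -/
noncomputable def F (t : ℝ) : ℝ :=
  -(deriv etaFun (1/2 + t * I) / etaFun (1/2 + t * I)).re

open ComplexConjugate

section AnalyticOrder

variable {𝕜 : Type*} [NontriviallyNormedField 𝕜] [CompleteSpace 𝕜] [CharZero 𝕜]
  {f : 𝕜 → 𝕜} {x : 𝕜}

theorem AnalyticAt.tendsto_div_deriv_nhdsNE_zero (hf : AnalyticAt 𝕜 f x) (h0 : f x = 0)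
    (hord : analyticOrderAt f x ≠ ⊤) :
    (∀ᶠ z in 𝓝[≠] x, deriv f z ≠ 0) ∧ Tendsto (fun z => f z / deriv f z) (𝓝[≠] x) (𝓝 0) := by
  obtain ⟨m, hm⟩ := ENat.ne_top_iff_exists.mp hord
  obtain ⟨n, rfl⟩ : ∃ n, m = n + 1 := Nat.exists_eq_add_one.mpr <| Nat.pos_of_ne_zero <| by
    rintro rfl
    exact hf.analyticOrderAt_ne_zero.mpr h0 hm.symm
  have hd : analyticOrderAt (deriv f) x = n := by
    have := hf.analyticOrderAt_deriv_add_one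
    simp only [h0, sub_zero, ← hm] at this
    simpa using this
  obtain ⟨g, hg, -, hfg⟩ := hf.analyticOrderAt_eq_natCast.mp hm.symm
  obtain ⟨k, hk, hkx, hfk⟩ := hf.deriv.analyticOrderAt_eq_natCast.mp hd
  have hquot : Tendsto (fun z => (z - x) * g z / k z) (𝓝 x) (𝓝 0) := by
    have hc : ContinuousAt (fun z => (z - x) * g z / k z) x :=
      ((continuousAt_id.sub continuousAt_const).mul hg.continuousAt).div hk.continuousAt hkx
    simpa using hc.tendsto
  have hev : ∀ᶠ z in 𝓝[≠] x, deriv f z ≠ 0 ∧ f z / deriv f z = (z - x) * g z / k z := by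
    filter_upwards [nhdsWithin_le_nhds (hfg.and (hfk.and (hk.continuousAt.eventually_ne hkx))),
      self_mem_nhdsWithin] with z ⟨hfz, hdz, hkz⟩ hzx
    have hzx : z - x ≠ 0 := sub_ne_zero.mpr hzx
    rw [hfz, hdz, smul_eq_mul, smul_eq_mul]
    refine ⟨mul_ne_zero (pow_ne_zero _ hzx) hkz, ?_⟩
    field_simp
    ring
  exact ⟨hev.mono fun _ h => h.1,
    (hquot.mono_left nhdsWithin_le_nhds).congr' (hev.mono fun _ h => h.2.symm)⟩

theorem AnalyticAt.tendsto_mul_div_mul_sub_deriv {a b : 𝕜 → 𝕜} (hf : AnalyticAt 𝕜 f x)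
    (h0 : f x = 0) (hord : analyticOrderAt f x ≠ ⊤) (ha : ContinuousAt a x)
    (hb : ContinuousAt b x) :
    (∀ᶠ z in 𝓝[≠] x, b z * f z - deriv f z ≠ 0) ∧
      Tendsto (fun z => a z * f z / (b z * f z - deriv f z)) (𝓝[≠] x) (𝓝 0) := by
  obtain ⟨hf', hr⟩ := hf.tendsto_div_deriv_nhdsNE_zero h0 hord
  have hnum : Tendsto (fun z => a z * (f z / deriv f z)) (𝓝[≠] x) (𝓝 0) := by
    simpa using (ha.tendsto.mono_left nhdsWithin_le_nhds).mul hr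
  have hden : Tendsto (fun z => b z * (f z / deriv f z) - 1) (𝓝[≠] x) (𝓝 (-1)) := by
    simpa using ((hb.tendsto.mono_left nhdsWithin_le_nhds).mul hr).sub_const 1
  have hfactor : ∀ᶠ z in 𝓝[≠] x, a z * f z = deriv f z * (a z * (f z / deriv f z)) ∧
      b z * f z - deriv f z = deriv f z * (b z * (f z / deriv f z) - 1) := by
    filter_upwards [hf'] with z hz
    constructor <;> field_simp
  refine ⟨?_, ?_⟩
  · filter_upwards [hf', hfactor, hden.eventually_ne (neg_ne_zero.mpr one_ne_zero)]
      with z hz hfz hdz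
    rw [hfz.2]
    exact mul_ne_zero hz hdz
  · have hlim := hnum.div hden (neg_ne_zero.mpr one_ne_zero)
    rw [zero_div] at hlim
    refine hlim.congr' ?_
    filter_upwards [hf', hfactor] with z hz hfz
    rw [hfz.1, hfz.2, mul_div_mul_left _ _ hz]
    rfl

end AnalyticOrder

lemma Gammaℝ_conj (s : ℂ) : Gammaℝ (conj s) = conj (Gammaℝ s) := by
  have hπ : (Real.pi : ℂ).arg ≠ Real.pi := by
    rw [arg_ofReal_of_nonneg Real.pi_pos.le]
    exact Real.pi_ne_zero.symm
  have hexp : -conj s / 2 = conj (-s / 2) := by simp [map_div₀, map_ofNat]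
  have harg : conj s / 2 = conj (s / 2) := by simp [map_div₀, map_ofNat]
  rw [Gammaℝ_def, Gammaℝ_def, map_mul, hexp, harg, Gamma_conj, cpow_conj _ _ hπ, conj_ofReal]

lemma completedRiemannZeta_eq_Gammaℝ_mul {s : ℂ} (hs : 0 < s.re) :
    completedRiemannZeta s = Gammaℝ s * riemannZeta s := by
  rw [riemannZeta_def_of_ne_zero (ne_zero_of_re_pos hs),
    mul_div_cancel₀ _ (Gammaℝ_ne_zero_of_re_pos hs)]

lemma completedRiemannZeta_conj {s : ℂ} (hs : 0 < s.re) :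
    completedRiemannZeta (conj s) = conj (completedRiemannZeta s) := by
  rw [completedRiemannZeta_eq_Gammaℝ_mul hs, completedRiemannZeta_eq_Gammaℝ_mul (by rwa [conj_re]),
    map_mul, Gammaℝ_conj, riemannZeta_conj]

lemma analyticAt_completedRiemannZeta {s : ℂ} (h0 : s ≠ 0) (h1 : s ≠ 1) :
    AnalyticAt ℂ completedRiemannZeta s := by
  refine DifferentiableOn.analyticAt (s := {0, 1}ᶜ) (fun z hz => ?_) ?_
  · simp only [Set.mem_compl_iff, Set.mem_insert_iff, Set.mem_singleton_iff, not_or] at hz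
    exact (differentiableAt_completedZeta hz.1 hz.2).differentiableWithinAt
  · exact ((Set.finite_singleton 1).insert 0).isClosed.isOpen_compl.mem_nhds (by simp [h0, h1])

lemma riemannZeta_eventually_ne_zero_nhdsNE (s : ℂ) : ∀ᶠ z in 𝓝[≠] s, riemannZeta z ≠ 0 := by
  rcases eq_or_ne s 1 with rfl | hs
  · exact riemannZeta_eventually_ne_zero_nhds_one.filter_mono nhdsWithin_le_nhds
  by_contra h
  simp only [not_eventually, not_not] at h
  exact riemannZeta_ne_zero_of_one_lt_re (by norm_num) <|
    analyticOn_riemannZeta.eqOn_zero_of_preconnected_of_frequently_eq_zero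
      (isConnected_compl_singleton_of_one_lt_rank (by simp) 1).isPreconnected hs h
      (show (2 : ℂ) ∈ ({1}ᶜ : Set ℂ) by norm_num)

lemma continuousAt_logDeriv_Gammaℝ_inv {s : ℂ} (hs : 0 < s.re) :
    ContinuousAt (logDeriv fun z => (Gammaℝ z)⁻¹) s :=
  ((differentiable_Gammaℝ_inv.analyticAt s).deriv.continuousAt).div
    differentiable_Gammaℝ_inv.continuous.continuousAt (inv_ne_zero (Gammaℝ_ne_zero_of_re_pos hs))

lemma etaFun_eq {s : ℂ} (hs : 0 < s.re) (h1 : s ≠ 1) :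
    etaFun s = deriv completedRiemannZeta s
      + logDeriv (fun z => (Gammaℝ z)⁻¹) s * completedRiemannZeta s := by
  have hΓ := Gammaℝ_ne_zero_of_re_pos hs
  have hζ : riemannZeta =ᶠ[𝓝 s] fun z => completedRiemannZeta z * (Gammaℝ z)⁻¹ := by
    filter_upwards [isOpen_compl_singleton.mem_nhds (ne_zero_of_re_pos hs)] with z hz
    exact riemannZeta_def_of_ne_zero hz
  change Gammaℝ s * deriv riemannZeta s = _
  rw [hζ.deriv_eq, deriv_fun_mul (differentiableAt_completedZeta (ne_zero_of_re_pos hs) h1)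
    differentiable_Gammaℝ_inv.differentiableAt, logDeriv_apply]
  field_simp

lemma one_half_add_mul_I_ne_zero (v : ℝ) : (1/2 + v * I : ℂ) ≠ 0 :=
  ne_zero_of_re_pos (by simp)

lemma one_half_add_mul_I_ne_one (v : ℝ) : (1/2 + v * I : ℂ) ≠ 1 := by
  intro h
  simpa using congrArg re h

noncomputable def completedZetaLine (v : ℝ) : ℝ := (completedRiemannZeta (1/2 + v * I)).re

lemma ofReal_completedZetaLine (v : ℝ) :
    (completedZetaLine v : ℂ) = completedRiemannZeta (1/2 + v * I) := by
  refine conj_eq_iff_re.mp ?_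
  have hconj : conj (1/2 + v * I : ℂ) = 1 - (1/2 + v * I) := by
    simp only [map_add, map_div₀, map_one, map_ofNat, map_mul, conj_ofReal, conj_I]
    ring
  rw [← completedRiemannZeta_conj (by simp), hconj, completedRiemannZeta_one_sub]

lemma completedZetaLine_eq_zero_iff (v : ℝ) :
    completedZetaLine v = 0 ↔ riemannZeta (1/2 + v * I) = 0 := by
  rw [← ofReal_eq_zero, ofReal_completedZetaLine, completedRiemannZeta_eq_Gammaℝ_mul (by simp),
    mul_eq_zero, or_iff_right (Gammaℝ_ne_zero_of_re_pos (by simp))]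

lemma analyticAt_completedZetaLine (v : ℝ) : AnalyticAt ℝ completedZetaLine v := by
  have hline : AnalyticAt ℝ (fun t : ℝ => (1/2 + t * I : ℂ)) v :=
    analyticAt_const.add (ofRealCLM.analyticAt v |>.mul analyticAt_const)
  exact reCLM.analyticAt _ |>.comp <|
    ((analyticAt_completedRiemannZeta (one_half_add_mul_I_ne_zero v)
      (one_half_add_mul_I_ne_one v)).restrictScalars (𝕜 := ℝ)).comp_of_eq hline rfl

lemma analyticOrderAt_completedZetaLine_ne_top (v : ℝ) :
    analyticOrderAt completedZetaLine v ≠ ⊤ := by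
  rw [Ne, analyticOrderAt_eq_top]
  intro h
  have hline : Tendsto (fun t : ℝ => (1/2 + t * I : ℂ)) (𝓝[≠] v) (𝓝[≠] (1/2 + v * I)) :=
    (by fun_prop : Continuous fun t : ℝ => (1/2 + t * I : ℂ)).continuousWithinAt.tendsto_nhdsWithin
      fun t ht h => ht (by simpa using congrArg im h)
  obtain ⟨t, hζ, hφ⟩ := ((hline.eventually (riemannZeta_eventually_ne_zero_nhdsNE _)).and
    (h.filter_mono nhdsWithin_le_nhds)).exists
  exact hζ ((completedZetaLine_eq_zero_iff t).mp hφ)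

lemma deriv_completedRiemannZeta_line (v : ℝ) :
    deriv completedRiemannZeta (1/2 + v * I) = -I * deriv completedZetaLine v := by
  have hΛ : HasDerivAt (fun w : ℂ => completedRiemannZeta (1/2 + w * I))
      (deriv completedRiemannZeta (1/2 + v * I) * I) v := by
    have := (differentiableAt_completedZeta (one_half_add_mul_I_ne_zero v)
      (one_half_add_mul_I_ne_one v)).hasDerivAt.comp (v : ℂ)
      (((hasDerivAt_id (v : ℂ)).mul_const I).const_add (1/2))
    simpa [Function.comp_def] using this
  have hφ := (analyticAt_completedZetaLine v).differentiableAt.hasDerivAt.ofReal_comp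
  simp only [ofReal_completedZetaLine] at hφ
  have h := hΛ.comp_ofReal.unique hφ
  linear_combination (-I) * h + deriv completedRiemannZeta (1/2 + v * I) * I_sq

lemma etaFun_line (v : ℝ) :
    etaFun (1/2 + v * I) = -I * deriv completedZetaLine v
      + logDeriv (fun z => (Gammaℝ z)⁻¹) (1/2 + v * I) * completedZetaLine v := by
  rw [etaFun_eq (by simp) (one_half_add_mul_I_ne_one v), deriv_completedRiemannZeta_line,
    ofReal_completedZetaLine]

lemma re_etaFun_line (v : ℝ) : (etaFun (1/2 + v * I)).re
    = (logDeriv (fun z => (Gammaℝ z)⁻¹) (1/2 + v * I)).re * completedZetaLine v := by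
  rw [etaFun_line]
  simp

lemma im_etaFun_line (v : ℝ) : (etaFun (1/2 + v * I)).im
    = (logDeriv (fun z => (Gammaℝ z)⁻¹) (1/2 + v * I)).im * completedZetaLine v
      - deriv completedZetaLine v := by
  rw [etaFun_line]
  simp only [add_im, neg_mul, neg_im, mul_im, I_re, I_im, ofReal_re, ofReal_im]
  ring

theorem tendsto_re_div_im_etaFun_line {γ : ℝ} (hγ : completedZetaLine γ = 0) :
    (∀ᶠ v : ℝ in 𝓝[≠] γ, (etaFun (1/2 + v * I)).im ≠ 0) ∧
      Tendsto (fun v : ℝ => (etaFun (1/2 + v * I)).re / (etaFun (1/2 + v * I)).im)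
        (𝓝[≠] γ) (𝓝 0) := by
  have hL : ContinuousAt (fun v : ℝ => logDeriv (fun z => (Gammaℝ z)⁻¹) (1/2 + v * I)) γ :=
    (continuousAt_logDeriv_Gammaℝ_inv (by simp)).comp (by fun_prop)
  simp only [re_etaFun_line, im_etaFun_line]
  exact (analyticAt_completedZetaLine γ).tendsto_mul_div_mul_sub_deriv hγ
    (analyticOrderAt_completedZetaLine_ne_top γ) (continuous_re.continuousAt.comp hL)
    (continuous_im.continuousAt.comp hL)

theorem arg_eta_near_zero_general (γ : ℝ)
    (hz : riemannZeta (1/2 + γ * I) = 0) :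
    ∃ δ > 0,
      (∀ v : ℝ, 0 < |v - γ| → |v - γ| < δ →
        etaFun (1/2 + v * I) ≠ 0 ∧ (etaFun (1/2 + v * I)).im ≠ 0) ∧
      Filter.Tendsto (fun v : ℝ => (etaFun (1/2 + v * I)).re / (etaFun (1/2 + v * I)).im)
        (nhdsWithin γ {γ}ᶜ) (nhds 0) := by
  obtain ⟨him, hlim⟩ := tendsto_re_div_im_etaFun_line ((completedZetaLine_eq_zero_iff γ).mpr hz)
  obtain ⟨δ, hδ, hball⟩ := Metric.eventually_nhds_iff.mp (eventually_nhdsWithin_iff.mp him)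
  refine ⟨δ, hδ, fun v hv0 hvδ => ?_, hlim⟩
  have hv : (etaFun (1/2 + v * I)).im ≠ 0 :=
    hball (by rwa [Real.dist_eq]) (sub_ne_zero.mp (abs_pos.mp hv0))
  exact ⟨fun h => hv (by rw [h, zero_im]), hv⟩

/-- Let `ρ = 1/2 + iγ`, `γ > 0`, be a zero of `ζ`. Then near (but not at) `γ` one has
`η(1/2+iv) ≠ 0` and `Im η(1/2+iv) ≠ 0`, and `Re η(1/2+iv)/Im η(1/2+iv) → 0` as `v → γ`
(from either side); i.e. the one-sided limits of `arg η(1/2+iv)` are `≡ π/2 (mod π)`. -/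
theorem arg_eta_near_zero (γ : ℝ) (hγ : 0 < γ)
    (hz : riemannZeta (1/2 + γ * I) = 0) :
    ∃ δ > 0,
      (∀ v : ℝ, 0 < |v - γ| → |v - γ| < δ →
        etaFun (1/2 + v * I) ≠ 0 ∧ (etaFun (1/2 + v * I)).im ≠ 0) ∧
      Filter.Tendsto (fun v : ℝ => (etaFun (1/2 + v * I)).re / (etaFun (1/2 + v * I)).im)
        (nhdsWithin γ {γ}ᶜ) (nhds 0) :=
  arg_eta_near_zero_general γ hz
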